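/- arXiv:2411.15434 — 4 statements merged into one kernel-verified Lean document; each statement's English description precedes it below -/
import Mathlib

section
/- Let G be a group and H a finite-index subgroup of G. Then G is product separable (every product of finitely many finitely generated subgroups is closed in the profinite topology) if and only if H is product separable. -/
/-- The profinite topology on a group `G`: generated by cosets of finite-index subgroups. -/
def profiniteTopology (G : Type*) [Group G] : TopologicalSpace G :=
  TopologicalSpace.generateFrom
    {S : Set G | ∃ (H : Subgroup G) (g : G), H.FiniteIndex ∧ S = (g * ·) '' (H : Set G)}

/-- A group is product separable if every product of finitely many finitely generated
subgroups is closed in the profinite topology. -/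
def ProductSeparable (G : Type*) [Group G] : Prop :=
  ∀ (n : ℕ) (H : Fin n → Subgroup G), (∀ i, (H i).FG) →
    @IsClosed G (profiniteTopology G)
      {x : G | ∃ f : Fin n → G, (∀ i, f i ∈ H i) ∧ x = (List.ofFn f).prod}


/-!
Every group homomorphism is continuous for the profinite topologies, so product separability
passes to all subgroups by pulling product sets back along the inclusion. For `H` of finite index
the profinite topology of `H` is the subspace topology and `H` is closed, so closed subsets of `H`
stay closed in `G`.

For the converse let `N ≤ H` be the normal core of `H`. Each `Kᵢ` is a finite union of cosets
`tᵢ (Kᵢ ⊓ N)`, and `Kᵢ ⊓ N` is finitely generated by Schreier's lemma. With the partial products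
`Pᵢ = t₁ ⋯ tᵢ`, the product `t₁ m₁ ⋯ tₙ mₙ` equals `(P₁ m₁ P₁⁻¹) ⋯ (Pₙ mₙ Pₙ⁻¹) Pₙ`, so
`K₁ ⋯ Kₙ` is a finite union of right translates of products of finitely generated subgroups
of `N ≤ H`, each of which is closed.
-/

open Subgroup Topology Pointwise

namespace Subgroup

variable {G G' : Type*} [Group G] [Group G']

theorem FiniteIndex.comap {K : Subgroup G} (hK : K.FiniteIndex) (f : G' →* G) :
    (K.comap f).FiniteIndex :=
  ⟨by rw [index_comap]; exact (isFiniteRelIndex_of_finiteIndex (h := hK)).relIndex_ne_zero⟩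

theorem FG.map {K : Subgroup G} (hK : K.FG) (f : G →* G') : (K.map f).FG :=
  (fg_iff_submonoid_fg _).2 (((fg_iff_submonoid_fg K).1 hK).map f)

theorem FG.subgroupOf {K H : Subgroup G} (hK : K.FG) (hKH : K ≤ H) : (K.subgroupOf H).FG := by
  have : Group.FG K := (Group.fg_iff_subgroup_fg K).2 hK
  have : Group.FG (K.subgroupOf H) :=
    Group.fg_of_surjective (f := (subgroupOfEquivOfLe hKH).symm.toMonoidHom)
      (subgroupOfEquivOfLe hKH).symm.surjective
  exact (Group.fg_iff_subgroup_fg _).1 inferInstance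

theorem FG.inf_of_finiteIndex {K : Subgroup G} (hK : K.FG) (N : Subgroup G) [N.FiniteIndex] :
    (K ⊓ N).FG := by
  have : Group.FG K := (Group.fg_iff_subgroup_fg K).2 hK
  have hfg : (N.subgroupOf K).FG := (Group.fg_iff_subgroup_fg _).1 inferInstance
  simpa [subgroupOf_map_subtype, inf_comm] using hfg.map K.subtype

end Subgroup

namespace profiniteTopology

variable {G G' : Type*} [Group G] [Group G']

theorem isOpen_leftCoset {K : Subgroup G} (hK : K.FiniteIndex) (g : G) :
    IsOpen[profiniteTopology G] ((g * ·) '' (K : Set G)) :=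
  .basic _ ⟨K, g, hK, rfl⟩

theorem isClosed_coe {K : Subgroup G} (hK : K.FiniteIndex) :
    IsClosed[profiniteTopology G] (K : Set G) := by
  let _ := profiniteTopology G
  have hcompl : (K : Set G)ᶜ = ⋃ g ∈ (K : Set G)ᶜ, (g * ·) '' (K : Set G) := by
    ext x
    simp only [Set.image_mul_left, Set.mem_iUnion, Set.mem_preimage, SetLike.mem_coe,
      Set.mem_compl_iff, exists_prop]
    refine ⟨fun hx => ⟨x, hx, by simp⟩, ?_⟩
    rintro ⟨g, hg, hgx⟩ hx
    exact hg (by simpa using mul_mem hx (inv_mem hgx))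
  exact ⟨hcompl ▸ isOpen_biUnion fun g _ => isOpen_leftCoset hK g⟩

theorem continuous_monoidHom (f : G →* G') :
    Continuous[profiniteTopology G, profiniteTopology G'] f := by
  let _ := profiniteTopology G
  refine continuous_generateFrom_iff.2 ?_
  rintro _ ⟨K, g, hK, rfl⟩
  rcases (f ⁻¹' ((g * ·) '' (K : Set G'))).eq_empty_or_nonempty with h | ⟨x, hx⟩
  · exact h ▸ isOpen_empty
  have hx' : g⁻¹ * f x ∈ K := by simpa [Set.image_mul_left] using hx
  have hcoset : f ⁻¹' ((g * ·) '' (K : Set G')) = (x * ·) '' (K.comap f : Set G) := by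
    ext y
    simp only [Set.image_mul_left, Set.mem_preimage, SetLike.mem_coe, mem_comap, map_mul,
      map_inv]
    constructor
    · intro hy; simpa [mul_assoc] using mul_mem (inv_mem hx') hy
    · intro hy; simpa [mul_assoc] using mul_mem hx' hy
  rw [hcoset]
  exact isOpen_leftCoset (hK.comap f) x

theorem continuous_mul_left (t : G) :
    Continuous[profiniteTopology G, profiniteTopology G] (t * ·) := by
  let _ := profiniteTopology G
  refine continuous_generateFrom_iff.2 ?_
  rintro _ ⟨K, g, hK, rfl⟩
  have hcoset : (t * ·) ⁻¹' ((g * ·) '' (K : Set G)) = ((t⁻¹ * g) * ·) '' (K : Set G) := by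
    ext y
    rw [Set.image_mul_left, Set.image_mul_left]
    simp only [Set.mem_preimage, SetLike.mem_coe, mul_inv_rev, inv_inv, mul_assoc]
  exact hcoset ▸ isOpen_leftCoset hK _

theorem continuous_mul_right (t : G) :
    Continuous[profiniteTopology G, profiniteTopology G] (· * t) := by
  let _ := profiniteTopology G
  have h : (· * t) = (t * ·) ∘ MulAut.conj t⁻¹ := by
    funext x; simp [mul_assoc]
  exact h ▸ (continuous_mul_left t).comp (continuous_monoidHom (MulAut.conj t⁻¹).toMonoidHom)

theorem isClosed_image_mul_right {S : Set G} (hS : IsClosed[profiniteTopology G] S) (t : G) :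
    IsClosed[profiniteTopology G] ((· * t) '' S) := by
  let _ := profiniteTopology G
  rw [Set.image_mul_right]
  exact hS.preimage (continuous_mul_right t⁻¹)

theorem induced_subtype {H : Subgroup G} (hH : H.FiniteIndex) :
    (profiniteTopology G).induced H.subtype = profiniteTopology H := by
  refine le_antisymm ?_ (continuous_monoidHom H.subtype).le_induced
  refine le_generateFrom ?_
  rintro _ ⟨L, h, hL, rfl⟩
  let _ := profiniteTopology G
  have hLG : (L.map H.subtype).FiniteIndex :=
    ⟨by rw [index_map_subtype]; exact mul_ne_zero hL.index_ne_zero hH.index_ne_zero⟩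
  refine isOpen_induced_iff.2 ⟨((h : G) * ·) '' (L.map H.subtype : Set G),
    isOpen_leftCoset hLG _, ?_⟩
  ext y
  simp only [Set.image_mul_left, Set.mem_preimage, SetLike.mem_coe]
  exact mem_map_iff_mem H.subtype_injective (x := h⁻¹ * y)

theorem isClosedEmbedding_subtype {H : Subgroup G} (hH : H.FiniteIndex) :
    @IsClosedEmbedding H G (profiniteTopology H) (profiniteTopology G) H.subtype :=
  @IsClosedEmbedding.mk _ _ (profiniteTopology H) (profiniteTopology G) _
    (@IsEmbedding.mk _ _ (profiniteTopology H) (profiniteTopology G) _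
      (@IsInducing.mk _ _ (profiniteTopology H) (profiniteTopology G) _
        (induced_subtype hH).symm) H.subtype_injective)
    (by rw [H.coe_subtype, Subtype.range_coe]; exact isClosed_coe hH)

end profiniteTopology

namespace Set

variable {M : Type*} [Monoid M] {n : ℕ}

theorem mem_prod_list_ofFn_iff_exists {x : M} {S : Fin n → Set M} :
    x ∈ (List.ofFn S).prod ↔ ∃ f : Fin n → M, (∀ i, f i ∈ S i) ∧ (List.ofFn f).prod = x := by
  rw [mem_prod_list_ofFn]
  exact ⟨fun ⟨f, hf⟩ => ⟨fun i => f i, fun i => (f i).2, hf⟩,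
    fun ⟨f, hf, hx⟩ => ⟨fun i => ⟨f i, hf i⟩, hx⟩⟩

theorem image_prod_list_ofFn {N F : Type*} [Monoid N] [FunLike F M N] [MonoidHomClass F M N]
    (f : F) (S : Fin n → Set M) :
    f '' (List.ofFn S).prod = (List.ofFn fun i => f '' S i).prod := by
  rw [image_list_prod, List.map_ofFn]
  rfl

theorem prod_list_ofFn_iUnion {ι : Fin n → Type*} (S : ∀ i, ι i → Set M) :
    (List.ofFn fun i => ⋃ j, S i j).prod =
      ⋃ c : ∀ i, ι i, (List.ofFn fun i => S i (c i)).prod := by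
  ext x
  simp only [mem_prod_list_ofFn_iff_exists, mem_iUnion]
  constructor
  · rintro ⟨f, hf, rfl⟩
    choose c hc using hf
    exact ⟨c, f, hc, rfl⟩
  · rintro ⟨c, f, hf, rfl⟩
    exact ⟨f, fun i => ⟨c i, hf i⟩, rfl⟩

end Set

section

variable {G : Type*} [Group G]

theorem List.prod_ofFn_mul_mul_inv {n : ℕ} (Q : Fin (n + 1) → G) (a : Fin n → G) :
    (List.ofFn fun i => Q i.castSucc * a i * (Q i.succ)⁻¹).prod =
      Q 0 * (List.ofFn a).prod * (Q (Fin.last n))⁻¹ := by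
  induction n with
  | zero => simp
  | succ n ih =>
    have htail := ih (fun i => Q i.succ) (fun i => a i.succ)
    rw [List.ofFn_succ, List.prod_cons]
    simp only [Fin.succ_castSucc] at htail ⊢
    rw [htail, List.ofFn_succ (f := a), List.prod_cons, Fin.succ_last]
    simp [mul_assoc]

theorem List.prod_ofFn_mul_eq_prod_conj_mul {n : ℕ} (t m : Fin n → G) :
    (List.ofFn fun i => t i * m i).prod =
      (List.ofFn fun i => Fin.partialProd t i.succ * m i * (Fin.partialProd t i.succ)⁻¹).prod *
        Fin.partialProd t (Fin.last n) := by
  have hconj : ∀ i, Fin.partialProd t i.succ * m i * (Fin.partialProd t i.succ)⁻¹ =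
      Fin.partialProd t i.castSucc * (t i * m i) * (Fin.partialProd t i.succ)⁻¹ := by
    intro i
    rw [Fin.partialProd_succ t i]
    group
  simp_rw [hconj, List.prod_ofFn_mul_mul_inv, Fin.partialProd_zero, one_mul, inv_mul_cancel_right]

theorem Set.prod_list_ofFn_smul {n : ℕ} (t : Fin n → G) (S : Fin n → Set G) :
    (List.ofFn fun i => t i • S i).prod =
      (· * Fin.partialProd t (Fin.last n)) ''
        (List.ofFn fun i => MulAut.conj (Fin.partialProd t i.succ) • S i).prod := by
  ext x
  simp only [Set.mem_prod_list_ofFn_iff_exists, Set.mem_image, Set.mem_smul_set, smul_eq_mul,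
    MulAut.smul_def, MulAut.conj_apply]
  constructor
  · rintro ⟨f, hf, rfl⟩
    choose m hm hfm using hf
    refine ⟨_, ⟨_, fun i => ⟨m i, hm i, rfl⟩, rfl⟩, ?_⟩
    rw [← List.prod_ofFn_mul_eq_prod_conj_mul]
    simp_rw [hfm]
  · rintro ⟨y, ⟨f, hf, rfl⟩, rfl⟩
    choose m hm hfm using hf
    refine ⟨fun i => t i * m i, fun i => ⟨m i, hm i, rfl⟩, ?_⟩
    rw [List.prod_ofFn_mul_eq_prod_conj_mul]
    simp_rw [hfm]

end

namespace Subgroup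

variable {G : Type*} [Group G]

theorem coe_eq_iUnion_smul_inf (K N : Subgroup G) :
    (K : Set G) = ⋃ q : K ⧸ N.subgroupOf K, ((q.out : K) : G) • ((K ⊓ N : Subgroup G) : Set G) := by
  ext k
  simp only [Set.mem_iUnion, Set.mem_smul_set, smul_eq_mul, SetLike.mem_coe, coe_inf,
    Set.mem_inter_iff]
  constructor
  · intro hk
    obtain ⟨h, hout⟩ := QuotientGroup.mk_out_eq_mul (N.subgroupOf K) ⟨k, hk⟩
    refine ⟨QuotientGroup.mk ⟨k, hk⟩, ((h : K) : G)⁻¹, ⟨inv_mem (h : K).2, inv_mem h.2⟩, ?_⟩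
    rw [hout]
    simp
  · rintro ⟨q, y, ⟨hyK, -⟩, rfl⟩
    exact mul_mem q.out.2 hyK

theorem coe_prod_list_ofFn_eq_iUnion {n : ℕ} (K : Fin n → Subgroup G) (N : Subgroup G) :
    (List.ofFn fun i => (K i : Set G)).prod =
      ⋃ c : ∀ i, K i ⧸ N.subgroupOf (K i),
        (· * Fin.partialProd (fun i => ((c i).out : G)) (Fin.last n)) ''
          (List.ofFn fun i => ((MulAut.conj (Fin.partialProd (fun i => ((c i).out : G)) i.succ) •
            (K i ⊓ N) : Subgroup G) : Set G)).prod := by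
  conv_lhs => enter [1, 1, i]; rw [coe_eq_iUnion_smul_inf (K i) N]
  simp_rw [Set.prod_list_ofFn_iUnion, Set.prod_list_ofFn_smul, coe_pointwise_smul]

end Subgroup

namespace ProductSeparable

open profiniteTopology

variable {G G' : Type*} [Group G] [Group G']

theorem iff_isClosed_prod_list_ofFn :
    ProductSeparable G ↔ ∀ (n : ℕ) (K : Fin n → Subgroup G), (∀ i, (K i).FG) →
      IsClosed[profiniteTopology G] (List.ofFn fun i => (K i : Set G)).prod := by
  have hset : ∀ (n : ℕ) (K : Fin n → Subgroup G),
      {x : G | ∃ f : Fin n → G, (∀ i, f i ∈ K i) ∧ x = (List.ofFn f).prod} =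
        (List.ofFn fun i => (K i : Set G)).prod := by
    intro n K
    ext x
    simp only [Set.mem_ofPred_eq, Set.mem_prod_list_ofFn_iff_exists, SetLike.mem_coe, eq_comm]
  simp only [ProductSeparable, hset]

theorem of_injective (hG : ProductSeparable G) {f : G' →* G} (hf : Function.Injective f) :
    ProductSeparable G' := by
  let _ := profiniteTopology G
  let _ := profiniteTopology G'
  rw [iff_isClosed_prod_list_ofFn] at hG ⊢
  intro n K hK
  have hpre : (List.ofFn fun i => (K i : Set G')).prod =
      f ⁻¹' (List.ofFn fun i => ((K i).map f : Set G)).prod := by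
    simp_rw [coe_map, ← Set.image_prod_list_ofFn, Set.preimage_image_eq _ hf]
  rw [hpre]
  exact (hG n _ fun i => (hK i).map f).preimage (continuous_monoidHom f)

theorem isClosed_prod_list_ofFn_of_le {H : Subgroup G} (hH : H.FiniteIndex)
    (hPS : ProductSeparable H) {n : ℕ} (L : Fin n → Subgroup G) (hLH : ∀ i, L i ≤ H)
    (hL : ∀ i, (L i).FG) :
    IsClosed[profiniteTopology G] (List.ofFn fun i => (L i : Set G)).prod := by
  rw [iff_isClosed_prod_list_ofFn] at hPS
  have hclosed := @IsClosedEmbedding.isClosedMap _ _ _ (profiniteTopology H) (profiniteTopology G)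
    (isClosedEmbedding_subtype hH) _
    (hPS n (fun i => (L i).subgroupOf H) fun i => (hL i).subgroupOf (hLH i))
  simp_rw [Set.image_prod_list_ofFn, ← coe_map, subgroupOf_map_subtype,
    inf_eq_left.2 (hLH _)] at hclosed
  exact hclosed

theorem of_finiteIndex {H : Subgroup G} (hH : H.FiniteIndex) (hPS : ProductSeparable H) :
    ProductSeparable G := by
  let _ := profiniteTopology G
  rw [iff_isClosed_prod_list_ofFn]
  intro n K hK
  rw [Subgroup.coe_prod_list_ofFn_eq_iUnion K H.normalCore]
  refine isClosed_iUnion_of_finite fun c => isClosed_image_mul_right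
    (hPS.isClosed_prod_list_ofFn_of_le hH _ (fun i => ?_) fun i => ?_) _
  · calc _ ≤ MulAut.conj _ • H.normalCore :=
          Subgroup.pointwise_smul_le_pointwise_smul_iff.2 inf_le_right
      _ = H.normalCore := Subgroup.Normal.conj_smul_eq_self _ _
      _ ≤ H := H.normalCore_le
  · exact ((hK i).inf_of_finiteIndex _).map _

end ProductSeparable

/-- A group `G` is product separable iff a finite-index subgroup `H` is product separable. -/
theorem productSeparable_iff_of_finiteIndex {G : Type*} [Group G]
    (H : Subgroup G) (hH : H.FiniteIndex) :
    ProductSeparable G ↔ ProductSeparable H :=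
  ⟨fun hG => hG.of_injective H.subtype_injective, .of_finiteIndex hH⟩
end

section
/- Let p ≥ 2 and q ≥ 2 with q odd. The group Sh(p,2q,2) = ⟨ s, t | s^p = t^2 = e, (st)^q = (ts)^q ⟩ is isomorphic to the semidirect product Sh(p,q,p) ⋊ ℤ/2ℤ, where Sh(p,q,p) = ⟨ σ, τ | σ^p = τ^p = e, prod(σ,τ;q) = prod(τ,σ;q) ⟩ and the generator of ℤ/2ℤ acts by swapping σ and τ. Consequently, the subgroup of Sh(p,2q,2) generated by s and tst has index 2 and is isomorphic to Sh(p,q,p). -/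
/-!
For an involution `u` and odd `q`, both `prod(a, uau; q)` and `prod(uau, a; q)` arise from
`prod(a, u; 2q)` and `prod(u, a; 2q)` by right multiplication with `u`. Hence the braid relation of
length `q` between `s` and `tst` is equivalent to the one of length `2q` between `s` and `t`, and
`σ ↦ s, τ ↦ tst, υ ↦ t` and `s ↦ σ, t ↦ υ` are mutually inverse homomorphisms between
`Sh(p,q,p) ⋊ ℤ/2ℤ` and `Sh(p,2q,2)`. The subgroup `⟨s, tst⟩` is the image of `Sh(p,q,p)`, which has
index `|ℤ/2ℤ| = 2` in the semidirect product.
-/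

/-- `prodWord a b m` is the alternating product `abab…` with `m` letters. -/
def prodWord {M : Type*} [Monoid M] (a b : M) (m : ℕ) : M := (a * b) ^ (m / 2) * a ^ (m % 2)

/-- Relators of the dihedral Shephard group `Sh(p,q,r)`. -/
def shRels (p q r : ℕ) : Set (FreeGroup Bool) :=
  { FreeGroup.of true ^ p, FreeGroup.of false ^ r,
    prodWord (FreeGroup.of true) (FreeGroup.of false) q *
      (prodWord (FreeGroup.of false) (FreeGroup.of true) q)⁻¹ }

/-- The dihedral Shephard group `Sh(p,q,r) = ⟨s,t ∣ s^p = t^r = 1, prod(s,t;q) = prod(t,s;q)⟩`. -/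
abbrev Sh (p q r : ℕ) : Type := PresentedGroup (shRels p q r)

/-- The generator `s` (of order dividing `p`) of `Sh(p,q,r)`. -/
def shS (p q r : ℕ) : Sh p q r := PresentedGroup.of true

/-- The generator `t` (of order dividing `r`) of `Sh(p,q,r)`. -/
def shT (p q r : ℕ) : Sh p q r := PresentedGroup.of false

open SemidirectProduct

section Involution

variable {G : Type*} [Group G]

lemma inv_eq_self_of_sq_eq_one {u : G} (hu : u ^ 2 = 1) : u⁻¹ = u :=
  inv_eq_of_mul_eq_one_right (by rwa [← sq])

lemma conj_pow_of_sq_eq_one {u : G} (hu : u ^ 2 = 1) (a : G) (n : ℕ) :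
    (u * a * u) ^ n = u * a ^ n * u := by
  simpa only [inv_eq_self_of_sq_eq_one hu] using conj_pow (a := u) (b := a) (i := n)

lemma Multiplicative.zmodTwo_eq_one_or_eq_ofAdd_one (x : Multiplicative (ZMod 2)) :
    x = 1 ∨ x = Multiplicative.ofAdd 1 := by
  revert x; decide

lemma orderOf_ofAdd_one_zmodTwo : orderOf (Multiplicative.ofAdd (1 : ZMod 2)) = 2 := by
  rw [orderOf_ofAdd_eq_addOrderOf, ZMod.addOrderOf_one]

lemma ofAdd_one_zmodTwo_sq : Multiplicative.ofAdd (1 : ZMod 2) ^ 2 = 1 := by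
  decide

noncomputable def involutionHom {t : G} (ht : t ^ 2 = 1) : Multiplicative (ZMod 2) →* G :=
  monoidHomOfForallMemZpowers (g := Multiplicative.ofAdd 1)
    (fun x => (Multiplicative.zmodTwo_eq_one_or_eq_ofAdd_one x).elim
      (fun h => h ▸ Subgroup.one_mem _) (fun h => h ▸ Subgroup.mem_zpowers _))
    (orderOf_ofAdd_one_zmodTwo ▸ orderOf_dvd_of_pow_eq_one ht)

@[simp]
lemma involutionHom_ofAdd_one {t : G} (ht : t ^ 2 = 1) :
    involutionHom ht (Multiplicative.ofAdd 1) = t :=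
  monoidHomOfForallMemZpowers_apply_gen _ _

lemma zmodTwo_hom_ext {f g : Multiplicative (ZMod 2) →* G}
    (h : f (Multiplicative.ofAdd 1) = g (Multiplicative.ofAdd 1)) : f = g := by
  refine MonoidHom.ext fun x => ?_
  rcases Multiplicative.zmodTwo_eq_one_or_eq_ofAdd_one x with rfl | rfl
  · simp only [map_one]
  · exact h

end Involution

section ProdWord

variable {G H : Type*} [Group G] [Group H]

lemma map_prodWord (f : G →* H) (a b : G) (m : ℕ) :
    f (prodWord a b m) = prodWord (f a) (f b) m := by
  simp only [prodWord, map_mul, map_pow]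

lemma prodWord_two_mul (a b : G) (n : ℕ) : prodWord a b (2 * n) = (a * b) ^ n := by
  simp [prodWord]

lemma prodWord_two_mul_add_one (a b : G) (n : ℕ) :
    prodWord a b (2 * n + 1) = (a * b) ^ n * a := by
  simp [prodWord, Nat.mul_add_div]

lemma prodWord_conj_right {a u : G} (hu : u ^ 2 = 1) {q : ℕ} (hq : Odd q) :
    prodWord a (u * a * u) q = prodWord a u (2 * q) * u := by
  obtain ⟨k, rfl⟩ := hq
  have hsq : (a * u) ^ 2 = a * (u * a * u) := by simp only [sq, mul_assoc]
  rw [prodWord_two_mul_add_one, prodWord_two_mul, pow_succ, pow_mul, hsq,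
    mul_assoc _ (a * u), mul_assoc a, ← sq, hu, mul_one]

lemma prodWord_conj_left (a u : G) {q : ℕ} (hq : Odd q) :
    prodWord (u * a * u) a q = prodWord u a (2 * q) * u := by
  obtain ⟨k, rfl⟩ := hq
  have hsq : (u * a) ^ 2 = u * a * u * a := by simp only [sq, mul_assoc]
  rw [prodWord_two_mul_add_one, prodWord_two_mul, pow_succ, pow_mul, hsq]
  simp only [mul_assoc]

lemma prodWord_conj_comm_iff {a u : G} (hu : u ^ 2 = 1) {q : ℕ} (hq : Odd q) :
    prodWord a (u * a * u) q = prodWord (u * a * u) a q ↔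
      prodWord a u (2 * q) = prodWord u a (2 * q) := by
  rw [prodWord_conj_right hu hq, prodWord_conj_left a u hq, mul_left_inj]

end ProdWord

namespace SemidirectProduct

variable {N G : Type*} [Group N] [Group G] {φ : G →* MulAut N}

lemma inr_mul_inl_mul_inr_of_sq_eq_one {g : G} (hg : g ^ 2 = 1) (n : N) :
    (inr g * inl n * inr g : N ⋊[φ] G) = inl (φ g n) := by
  rw [inl_aut, inv_eq_self_of_sq_eq_one hg]

lemma inr_ofAdd_one_sq {φ : Multiplicative (ZMod 2) →* MulAut N} :
    (inr (Multiplicative.ofAdd 1) : N ⋊[φ] _) ^ 2 = 1 := by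
  rw [← map_pow, ofAdd_one_zmodTwo_sq, map_one]

lemma index_range_inl : (inl : N →* N ⋊[φ] G).range.index = Nat.card G := by
  rw [range_inl_eq_ker_rightHom, Subgroup.index_ker,
    MonoidHom.range_eq_top.mpr rightHom_surjective, Subgroup.card_top]

end SemidirectProduct

namespace Sh

variable {G : Type*} [Group G] {p q r : ℕ}

lemma mk_eq_one_of_mem_shRels {x : FreeGroup Bool} (hx : x ∈ shRels p q r) :
    PresentedGroup.mk (shRels p q r) x = 1 :=
  (QuotientGroup.eq_one_iff _).mpr (Subgroup.subset_normalClosure hx)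

variable (p q r) in
lemma shS_pow : shS p q r ^ p = 1 := by
  have h := mk_eq_one_of_mem_shRels (p := p) (q := q) (r := r) (.inl rfl)
  rwa [map_pow] at h

variable (p q r) in
lemma shT_pow : shT p q r ^ r = 1 := by
  have h := mk_eq_one_of_mem_shRels (p := p) (q := q) (r := r) (.inr (.inl rfl))
  rwa [map_pow] at h

variable (p q r) in
lemma prodWord_shS_shT :
    prodWord (shS p q r) (shT p q r) q = prodWord (shT p q r) (shS p q r) q := by
  have h := mk_eq_one_of_mem_shRels (p := p) (q := q) (r := r) (.inr (.inr rfl))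
  rwa [map_mul, map_inv, mul_inv_eq_one, map_prodWord, map_prodWord] at h

def lift (a b : G) (ha : a ^ p = 1) (hb : b ^ r = 1) (hab : prodWord a b q = prodWord b a q) :
    Sh p q r →* G :=
  PresentedGroup.toGroup (f := fun x => bif x then a else b) <| by
    rintro _ (rfl | rfl | rfl)
    · simpa only [map_pow, FreeGroup.lift_apply_of]
    · simpa only [map_pow, FreeGroup.lift_apply_of]
    · simpa only [map_mul, map_inv, mul_inv_eq_one, map_prodWord, FreeGroup.lift_apply_of]

section Lift

variable {a b : G} {ha : a ^ p = 1} {hb : b ^ r = 1} {hab : prodWord a b q = prodWord b a q}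

@[simp]
lemma lift_shS : lift a b ha hb hab (shS p q r) = a := PresentedGroup.toGroup.of _

@[simp]
lemma lift_shT : lift a b ha hb hab (shT p q r) = b := PresentedGroup.toGroup.of _

end Lift

lemma hom_ext {f g : Sh p q r →* G} (hs : f (shS p q r) = g (shS p q r))
    (ht : f (shT p q r) = g (shT p q r)) : f = g :=
  PresentedGroup.ext <| Bool.forall_bool.mpr ⟨ht, hs⟩

variable (p q r) in
lemma closure_shS_shT : Subgroup.closure {shS p q r, shT p q r} = ⊤ := by
  rw [← PresentedGroup.closure_range_of (shRels p q r)]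
  congr 1
  ext x
  simp [shS, shT, or_comm]

variable (p q) in
def swapHom : Sh p q p →* Sh p q p :=
  lift (shT p q p) (shS p q p) (shT_pow p q p) (shS_pow p q p) (prodWord_shS_shT p q p).symm

variable (p q) in
lemma swapHom_comp_swapHom : (swapHom p q).comp (swapHom p q) = MonoidHom.id _ :=
  hom_ext (by simp [swapHom]) (by simp [swapHom])

variable (p q) in
def swap : MulAut (Sh p q p) :=
  (swapHom p q).toMulEquiv (swapHom p q) (swapHom_comp_swapHom p q) (swapHom_comp_swapHom p q)

@[simp]
lemma swap_shS : swap p q (shS p q p) = shT p q p := by simp [swap, swapHom]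

@[simp]
lemma swap_shT : swap p q (shT p q p) = shS p q p := by simp [swap, swapHom]

variable (p q) in
lemma swap_sq : swap p q ^ 2 = 1 :=
  MulEquiv.ext fun x => by
    rw [sq, MulAut.mul_apply]
    exact DFunLike.congr_fun (swapHom_comp_swapHom p q) x

variable (p q) in
noncomputable def swapAction : Multiplicative (ZMod 2) →* MulAut (Sh p q p) :=
  involutionHom (swap_sq p q)

@[simp]
lemma swapAction_ofAdd_one : swapAction p q (Multiplicative.ofAdd 1) = swap p q :=
  involutionHom_ofAdd_one _

end Sh

namespace Sh

section OddIndexTwo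

variable (p : ℕ) {q : ℕ} (hq : Odd q)

def toTwoMul : Sh p q p →* Sh p (2 * q) 2 :=
  lift (shS p (2 * q) 2) (shT p (2 * q) 2 * shS p (2 * q) 2 * shT p (2 * q) 2)
    (shS_pow _ _ _)
    (by rw [conj_pow_of_sq_eq_one (shT_pow _ _ _), shS_pow, mul_one, ← sq, shT_pow])
    ((prodWord_conj_comm_iff (shT_pow _ _ _) hq).mpr (prodWord_shS_shT _ _ _))

noncomputable def ofTwoMul :
    Sh p (2 * q) 2 →* Sh p q p ⋊[swapAction p q] Multiplicative (ZMod 2) :=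
  lift (inl (shS p q p)) (inr (Multiplicative.ofAdd 1))
    (by rw [← map_pow, shS_pow, map_one]) inr_ofAdd_one_sq
    ((prodWord_conj_comm_iff inr_ofAdd_one_sq hq).mp <| by
      rw [inr_mul_inl_mul_inr_of_sq_eq_one ofAdd_one_zmodTwo_sq, swapAction_ofAdd_one, swap_shS,
        ← map_prodWord, ← map_prodWord, prodWord_shS_shT])

@[simp]
lemma toTwoMul_shS : toTwoMul p hq (shS p q p) = shS p (2 * q) 2 := lift_shS

@[simp]
lemma toTwoMul_shT :
    toTwoMul p hq (shT p q p) = shT p (2 * q) 2 * shS p (2 * q) 2 * shT p (2 * q) 2 :=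
  lift_shT

@[simp]
lemma ofTwoMul_shS : ofTwoMul p hq (shS p (2 * q) 2) = inl (shS p q p) := lift_shS

@[simp]
lemma ofTwoMul_shT : ofTwoMul p hq (shT p (2 * q) 2) = inr (Multiplicative.ofAdd 1) := lift_shT

noncomputable def ofSemidirectProduct :
    Sh p q p ⋊[swapAction p q] Multiplicative (ZMod 2) →* Sh p (2 * q) 2 :=
  SemidirectProduct.lift (toTwoMul p hq) (involutionHom (shT_pow p (2 * q) 2)) <| by
    have ht := shT_pow p (2 * q) 2
    intro g
    rcases Multiplicative.zmodTwo_eq_one_or_eq_ofAdd_one g with rfl | rfl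
    · refine MonoidHom.ext fun x => ?_
      simp
    · refine hom_ext ?_ ?_
      · simp [inv_eq_self_of_sq_eq_one ht]
      · simp only [MonoidHom.comp_apply, MulEquiv.coe_toMonoidHom, swapAction_ofAdd_one, swap_shT,
          toTwoMul_shS, toTwoMul_shT, involutionHom_ofAdd_one, MulAut.conj_apply,
          inv_eq_self_of_sq_eq_one ht]
        rw [← mul_assoc, ← mul_assoc, ← sq, ht, one_mul, mul_assoc, ← sq, ht, mul_one]

noncomputable def semidirectProductEquiv :
    Sh p q p ⋊[swapAction p q] Multiplicative (ZMod 2) ≃* Sh p (2 * q) 2 :=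
  (ofSemidirectProduct p hq).toMulEquiv (ofTwoMul p hq)
    (SemidirectProduct.hom_ext
      (hom_ext (by simp [ofSemidirectProduct])
        (by simp [ofSemidirectProduct, inr_mul_inl_mul_inr_of_sq_eq_one ofAdd_one_zmodTwo_sq]))
      (zmodTwo_hom_ext (by simp [ofSemidirectProduct])))
    (hom_ext (by simp [ofSemidirectProduct]) (by simp [ofSemidirectProduct]))

@[simp]
lemma semidirectProductEquiv_inl (n : Sh p q p) :
    semidirectProductEquiv p hq (inl n) = toTwoMul p hq n := by
  simp [semidirectProductEquiv, ofSemidirectProduct]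

@[simp]
lemma semidirectProductEquiv_inr (g : Multiplicative (ZMod 2)) :
    semidirectProductEquiv p hq (inr g) = involutionHom (shT_pow p (2 * q) 2) g := by
  simp [semidirectProductEquiv, ofSemidirectProduct]

lemma closure_shS_conj_eq_map_range_inl :
    Subgroup.closure {shS p (2 * q) 2, shT p (2 * q) 2 * shS p (2 * q) 2 * shT p (2 * q) 2} =
      (inl : Sh p q p →* _).range.map
        (semidirectProductEquiv p hq : Sh p q p ⋊[swapAction p q] _ →* Sh p (2 * q) 2) := by
  rw [MonoidHom.range_eq_map, ← closure_shS_shT p q p, MonoidHom.map_closure,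
    MonoidHom.map_closure, Set.image_pair, Set.image_pair]
  simp

end OddIndexTwo

end Sh

theorem dihedral_shephard_odd_index_two_general (p q : ℕ) (hodd : Odd q) :
    (∃ (θ : Multiplicative (ZMod 2) →* MulAut (Sh p q p))
        (e : (Sh p q p) ⋊[θ] Multiplicative (ZMod 2) ≃* Sh p (2 * q) 2),
      (θ (Multiplicative.ofAdd 1)) (shS p q p) = shT p q p ∧
      (θ (Multiplicative.ofAdd 1)) (shT p q p) = shS p q p ∧
      e (SemidirectProduct.inl (shS p q p)) = shS p (2 * q) 2 ∧
      e (SemidirectProduct.inl (shT p q p))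
          = shT p (2 * q) 2 * shS p (2 * q) 2 * shT p (2 * q) 2 ∧
      e (SemidirectProduct.inr (Multiplicative.ofAdd 1)) = shT p (2 * q) 2) ∧
    (Subgroup.closure
        {shS p (2 * q) 2, shT p (2 * q) 2 * shS p (2 * q) 2 * shT p (2 * q) 2}).index = 2 ∧
    Nonempty (↥(Subgroup.closure
        {shS p (2 * q) 2, shT p (2 * q) 2 * shS p (2 * q) 2 * shT p (2 * q) 2})
      ≃* Sh p q p) := by
  rw [Sh.closure_shS_conj_eq_map_range_inl p hodd]
  refine ⟨⟨Sh.swapAction p q, Sh.semidirectProductEquiv p hodd, by simp, by simp, by simp,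
    by simp, by simp⟩, ?_, ?_⟩
  · simp [Subgroup.index_map_equiv, index_range_inl]
  · exact ⟨(MulEquiv.subgroupMap _ _).symm.trans (MonoidHom.ofInjective inl_injective).symm⟩

/-- For `q` odd, `Sh(p,2q,2) ≅ Sh(p,q,p) ⋊ ℤ/2ℤ` where the `ℤ/2ℤ`-generator swaps the two
standard generators `σ, τ` of `Sh(p,q,p)`; the isomorphism sends `σ ↦ s`, `τ ↦ tst`,
`υ ↦ t`.  Consequently the subgroup of `Sh(p,2q,2)` generated by `s` and `tst` has
index 2 and is isomorphic to `Sh(p,q,p)`. -/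
theorem dihedral_shephard_odd_index_two (p q : ℕ) (hp : 2 ≤ p) (hq : 2 ≤ q) (hodd : Odd q) :
    (∃ (θ : Multiplicative (ZMod 2) →* MulAut (Sh p q p))
        (e : (Sh p q p) ⋊[θ] Multiplicative (ZMod 2) ≃* Sh p (2 * q) 2),
      (θ (Multiplicative.ofAdd 1)) (shS p q p) = shT p q p ∧
      (θ (Multiplicative.ofAdd 1)) (shT p q p) = shS p q p ∧
      e (SemidirectProduct.inl (shS p q p)) = shS p (2 * q) 2 ∧
      e (SemidirectProduct.inl (shT p q p))
          = shT p (2 * q) 2 * shS p (2 * q) 2 * shT p (2 * q) 2 ∧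
      e (SemidirectProduct.inr (Multiplicative.ofAdd 1)) = shT p (2 * q) 2) ∧
    (Subgroup.closure
        {shS p (2 * q) 2, shT p (2 * q) 2 * shS p (2 * q) 2 * shT p (2 * q) 2}).index = 2 ∧
    Nonempty (↥(Subgroup.closure
        {shS p (2 * q) 2, shT p (2 * q) 2 * shS p (2 * q) 2 * shT p (2 * q) 2})
      ≃* Sh p q p) :=
  dihedral_shephard_odd_index_two_general p q hodd
end

section
/- Let p, q, r ≥ 2, let k = lcm(p,q,r), and m = k/p + k/q + k/r − k, assuming m ≠ 0. Then the group G = ⟨ s, t, φ | s^p = t^r = e, (st)^q = (ts)^q = φ^{-qm}, [s,φ] = [t,φ] = e ⟩ is isomorphic to Δ̃_k = ⟨ ã, b̃, c̃, z | ã^p = b̃^q = c̃^r = ã b̃ c̃ = z^k, [ã,z] = [b̃,z] = [c̃,z] = e ⟩, via ã ↦ φ^{k/p} s, b̃ ↦ φ^{k/q} (φ^m t s)^{-1}, c̃ ↦ φ^{k/r} t, z ↦ φ. -/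
/-- Relators of `Δ̃_k = ⟨ã, b̃, c̃, z ∣ ã^p = b̃^q = c̃^r = ã b̃ c̃ = z^k, z central⟩`, with
generators `ã = 0`, `b̃ = 1`, `c̃ = 2`, `z = 3`. -/
def deltaTildeRels (p q r k : ℕ) : Set (FreeGroup (Fin 4)) :=
  { FreeGroup.of 0 ^ p * (FreeGroup.of 3 ^ k)⁻¹,
    FreeGroup.of 1 ^ q * (FreeGroup.of 3 ^ k)⁻¹,
    FreeGroup.of 2 ^ r * (FreeGroup.of 3 ^ k)⁻¹,
    FreeGroup.of 0 * FreeGroup.of 1 * FreeGroup.of 2 * (FreeGroup.of 3 ^ k)⁻¹,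
    FreeGroup.of 0 * FreeGroup.of 3 * (FreeGroup.of 0)⁻¹ * (FreeGroup.of 3)⁻¹,
    FreeGroup.of 1 * FreeGroup.of 3 * (FreeGroup.of 1)⁻¹ * (FreeGroup.of 3)⁻¹,
    FreeGroup.of 2 * FreeGroup.of 3 * (FreeGroup.of 2)⁻¹ * (FreeGroup.of 3)⁻¹ }

/-- The group `Δ̃_k`. -/
abbrev DeltaTilde (p q r k : ℕ) : Type := PresentedGroup (deltaTildeRels p q r k)

/-- Relators of `G = ⟨s, t, φ ∣ s^p = t^r = 1, (st)^q = (ts)^q = φ^{-qm}, φ central⟩`, with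
generators `s = 0`, `t = 1`, `φ = 2`. -/
def centExtRels (p q r : ℕ) (m : ℤ) : Set (FreeGroup (Fin 3)) :=
  { FreeGroup.of 0 ^ p, FreeGroup.of 1 ^ r,
    (FreeGroup.of 0 * FreeGroup.of 1) ^ q * FreeGroup.of 2 ^ ((q : ℤ) * m),
    (FreeGroup.of 1 * FreeGroup.of 0) ^ q * FreeGroup.of 2 ^ ((q : ℤ) * m),
    FreeGroup.of 0 * FreeGroup.of 2 * (FreeGroup.of 0)⁻¹ * (FreeGroup.of 2)⁻¹,
    FreeGroup.of 1 * FreeGroup.of 2 * (FreeGroup.of 1)⁻¹ * (FreeGroup.of 2)⁻¹ }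

/-- The group `G` of the statement. -/
abbrev CentExtGroup (p q r : ℕ) (m : ℤ) : Type := PresentedGroup (centExtRels p q r m)

theorem relOne' {α : Type*} {rels : Set (FreeGroup α)} {w : FreeGroup α} (h : w ∈ rels) :
    PresentedGroup.mk rels w = 1 :=
  (QuotientGroup.eq_one_iff w).mpr (Subgroup.subset_normalClosure h)

theorem commute_all' {α : Type*} {rels : Set (FreeGroup α)} {g : PresentedGroup rels}
    (h : ∀ i, Commute g (PresentedGroup.of i)) (x : PresentedGroup rels) : Commute g x := by
  induction x using PresentedGroup.induction_on with
  | H z =>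
    induction z using FreeGroup.induction_on with
    | C1 => rw [map_one]; exact Commute.one_right g
    | of i => exact h i
    | inv_of i ih => rw [map_inv]; exact ih.inv_right
    | mul u v hu hv => rw [map_mul]; exact hu.mul_right hv

/-- the forward generator map. -/
def fwdGen (p q r k : ℕ) (m : ℤ) : Fin 4 → CentExtGroup p q r m
  | 0 => PresentedGroup.of 2 ^ (k / p) * PresentedGroup.of 0
  | 1 => PresentedGroup.of 2 ^ (k / q) *
      ((PresentedGroup.of 2 : CentExtGroup p q r m) ^ m * PresentedGroup.of 1 *
        PresentedGroup.of 0)⁻¹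
  | 2 => PresentedGroup.of 2 ^ (k / r) * PresentedGroup.of 1
  | 3 => PresentedGroup.of 2

@[simp] lemma fwdGen_zero (p q r k : ℕ) (m : ℤ) : fwdGen p q r k m 0 =
    PresentedGroup.of 2 ^ (k / p) * PresentedGroup.of 0 := rfl
@[simp] lemma fwdGen_one (p q r k : ℕ) (m : ℤ) : fwdGen p q r k m 1 =
    PresentedGroup.of 2 ^ (k / q) *
      ((PresentedGroup.of 2 : CentExtGroup p q r m) ^ m * PresentedGroup.of 1 *
        PresentedGroup.of 0)⁻¹ := rfl
@[simp] lemma fwdGen_two (p q r k : ℕ) (m : ℤ) : fwdGen p q r k m 2 =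
    PresentedGroup.of 2 ^ (k / r) * PresentedGroup.of 1 := rfl
@[simp] lemma fwdGen_three (p q r k : ℕ) (m : ℤ) : fwdGen p q r k m 3 =
    PresentedGroup.of 2 := rfl

/-- the backward generator map. -/
def bwdGen (p q r k : ℕ) : Fin 3 → DeltaTilde p q r k
  | 0 => (PresentedGroup.of 3 : DeltaTilde p q r k) ^ (-((k / p : ℕ) : ℤ)) * PresentedGroup.of 0
  | 1 => (PresentedGroup.of 3 : DeltaTilde p q r k) ^ (-((k / r : ℕ) : ℤ)) * PresentedGroup.of 2
  | 2 => PresentedGroup.of 3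

@[simp] lemma bwdGen_zero (p q r k : ℕ) : bwdGen p q r k 0 =
    (PresentedGroup.of 3 : DeltaTilde p q r k) ^ (-((k / p : ℕ) : ℤ)) * PresentedGroup.of 0 := rfl
@[simp] lemma bwdGen_one (p q r k : ℕ) : bwdGen p q r k 1 =
    (PresentedGroup.of 3 : DeltaTilde p q r k) ^ (-((k / r : ℕ) : ℤ)) * PresentedGroup.of 2 := rfl
@[simp] lemma bwdGen_two (p q r k : ℕ) : bwdGen p q r k 2 =
    PresentedGroup.of 3 := rfl

section CentFacts
variable (p q r : ℕ) (m : ℤ)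

local notation "S" => (PresentedGroup.of 0 : CentExtGroup p q r m)
local notation "T" => (PresentedGroup.of 1 : CentExtGroup p q r m)
local notation "P" => (PresentedGroup.of 2 : CentExtGroup p q r m)

lemma ce_hS : S ^ p = 1 := by
  have h := relOne' (show (FreeGroup.of 0 ^ p : FreeGroup (Fin 3)) ∈ centExtRels p q r m by
    simp [centExtRels])
  simpa only [map_pow, PresentedGroup.of] using h

lemma ce_hT : T ^ r = 1 := by
  have h := relOne' (show (FreeGroup.of 1 ^ r : FreeGroup (Fin 3)) ∈ centExtRels p q r m by
    simp [centExtRels])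
  simpa only [map_pow, PresentedGroup.of] using h

lemma ce_hST : (S * T) ^ q * P ^ ((q : ℤ) * m) = 1 := by
  have h := relOne' (show ((FreeGroup.of 0 * FreeGroup.of 1) ^ q *
      FreeGroup.of 2 ^ ((q : ℤ) * m) : FreeGroup (Fin 3)) ∈ centExtRels p q r m by
    simp [centExtRels])
  simpa only [map_mul, map_pow, map_zpow, PresentedGroup.of] using h

lemma ce_hTS : (T * S) ^ q * P ^ ((q : ℤ) * m) = 1 := by
  have h := relOne' (show ((FreeGroup.of 1 * FreeGroup.of 0) ^ q *
      FreeGroup.of 2 ^ ((q : ℤ) * m) : FreeGroup (Fin 3)) ∈ centExtRels p q r m by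
    simp [centExtRels])
  simpa only [map_mul, map_pow, map_zpow, PresentedGroup.of] using h

lemma ce_hPS : Commute S P := by
  have h := relOne' (show (FreeGroup.of 0 * FreeGroup.of 2 * (FreeGroup.of 0)⁻¹ *
      (FreeGroup.of 2)⁻¹ : FreeGroup (Fin 3)) ∈ centExtRels p q r m by
    simp [centExtRels])
  simp only [map_mul, map_inv] at h
  rw [mul_inv_eq_one, mul_inv_eq_iff_eq_mul] at h
  exact h

lemma ce_hPT : Commute T P := by
  have h := relOne' (show (FreeGroup.of 1 * FreeGroup.of 2 * (FreeGroup.of 1)⁻¹ *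
      (FreeGroup.of 2)⁻¹ : FreeGroup (Fin 3)) ∈ centExtRels p q r m by
    simp [centExtRels])
  simp only [map_mul, map_inv] at h
  rw [mul_inv_eq_one, mul_inv_eq_iff_eq_mul] at h
  exact h

lemma ce_central (x : CentExtGroup p q r m) : Commute P x := by
  refine commute_all' ?_ x
  intro i
  fin_cases i
  · exact (ce_hPS p q r m).symm
  · exact (ce_hPT p q r m).symm
  · exact Commute.refl _

end CentFacts

section DeltaFacts
variable (p q r k : ℕ)

local notation "A" => (PresentedGroup.of 0 : DeltaTilde p q r k)
local notation "B" => (PresentedGroup.of 1 : DeltaTilde p q r k)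
local notation "C" => (PresentedGroup.of 2 : DeltaTilde p q r k)
local notation "Z" => (PresentedGroup.of 3 : DeltaTilde p q r k)

lemma dt_hA : A ^ p = Z ^ (k : ℤ) := by
  have h := relOne' (show (FreeGroup.of 0 ^ p * (FreeGroup.of 3 ^ k)⁻¹ : FreeGroup (Fin 4)) ∈
      deltaTildeRels p q r k by simp [deltaTildeRels])
  simp only [map_mul, map_pow, map_inv] at h
  rw [mul_inv_eq_one] at h
  rw [zpow_natCast]
  exact h

lemma dt_hB : B ^ q = Z ^ (k : ℤ) := by
  have h := relOne' (show (FreeGroup.of 1 ^ q * (FreeGroup.of 3 ^ k)⁻¹ : FreeGroup (Fin 4)) ∈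
      deltaTildeRels p q r k by simp [deltaTildeRels])
  simp only [map_mul, map_pow, map_inv] at h
  rw [mul_inv_eq_one] at h
  rw [zpow_natCast]
  exact h

lemma dt_hC : C ^ r = Z ^ (k : ℤ) := by
  have h := relOne' (show (FreeGroup.of 2 ^ r * (FreeGroup.of 3 ^ k)⁻¹ : FreeGroup (Fin 4)) ∈
      deltaTildeRels p q r k by simp [deltaTildeRels])
  simp only [map_mul, map_pow, map_inv] at h
  rw [mul_inv_eq_one] at h
  rw [zpow_natCast]
  exact h

lemma dt_hABC : A * B * C = Z ^ (k : ℤ) := by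
  have h := relOne' (show (FreeGroup.of 0 * FreeGroup.of 1 * FreeGroup.of 2 *
      (FreeGroup.of 3 ^ k)⁻¹ : FreeGroup (Fin 4)) ∈ deltaTildeRels p q r k by
    simp [deltaTildeRels])
  simp only [map_mul, map_pow, map_inv] at h
  rw [mul_inv_eq_one] at h
  rw [zpow_natCast]
  exact h

lemma dt_hZA : Commute A Z := by
  have h := relOne' (show (FreeGroup.of 0 * FreeGroup.of 3 * (FreeGroup.of 0)⁻¹ *
      (FreeGroup.of 3)⁻¹ : FreeGroup (Fin 4)) ∈ deltaTildeRels p q r k by simp [deltaTildeRels])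
  simp only [map_mul, map_inv] at h
  rw [mul_inv_eq_one, mul_inv_eq_iff_eq_mul] at h
  exact h

lemma dt_hZB : Commute B Z := by
  have h := relOne' (show (FreeGroup.of 1 * FreeGroup.of 3 * (FreeGroup.of 1)⁻¹ *
      (FreeGroup.of 3)⁻¹ : FreeGroup (Fin 4)) ∈ deltaTildeRels p q r k by simp [deltaTildeRels])
  simp only [map_mul, map_inv] at h
  rw [mul_inv_eq_one, mul_inv_eq_iff_eq_mul] at h
  exact h

lemma dt_hZC : Commute C Z := by
  have h := relOne' (show (FreeGroup.of 2 * FreeGroup.of 3 * (FreeGroup.of 2)⁻¹ *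
      (FreeGroup.of 3)⁻¹ : FreeGroup (Fin 4)) ∈ deltaTildeRels p q r k by simp [deltaTildeRels])
  simp only [map_mul, map_inv] at h
  rw [mul_inv_eq_one, mul_inv_eq_iff_eq_mul] at h
  exact h

lemma dt_central (x : DeltaTilde p q r k) : Commute Z x := by
  refine commute_all' ?_ x
  intro i
  fin_cases i
  · exact (dt_hZA p q r k).symm
  · exact (dt_hZB p q r k).symm
  · exact (dt_hZC p q r k).symm
  · exact Commute.refl _

lemma dt_hBe : B = Z ^ (k : ℤ) * (A⁻¹ * C⁻¹) := by
  have h1 : B = A⁻¹ * (A * B * C) * C⁻¹ := by group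
  rw [dt_hABC] at h1
  rw [h1, ← ((dt_central p q r k A⁻¹).zpow_left (k : ℤ)).eq, mul_assoc]

lemma dt_hCA : (C * A) ^ q = Z ^ ((k : ℤ) * q - k) := by
  have hB := dt_hB p q r k
  rw [dt_hBe p q r k] at hB
  rw [((dt_central p q r k (A⁻¹ * C⁻¹)).zpow_left (k : ℤ)).mul_pow,
    ← zpow_natCast ((PresentedGroup.of 3 : DeltaTilde p q r k) ^ (k : ℤ)) q, ← zpow_mul,
    ← mul_inv_rev, inv_pow] at hB
  have h3 : ((C * A) ^ q)⁻¹ = ((PresentedGroup.of 3 : DeltaTilde p q r k) ^ ((k : ℤ) * q))⁻¹ *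
      Z ^ (k : ℤ) := eq_inv_mul_iff_mul_eq.mpr hB
  have h4 : (C * A) ^ q = (Z ^ (k : ℤ))⁻¹ * Z ^ ((k : ℤ) * q) := by
    rw [← inv_inv ((C * A) ^ q), h3]; group
  rw [h4, ← zpow_neg, ← zpow_add]
  ring_nf

lemma dt_hAC : (A * C) ^ q = Z ^ ((k : ℤ) * q - k) := by
  have base : SemiconjBy A (C * A) (A * C) := by
    show A * (C * A) = A * C * A
    group
  have hsc := base.pow_right q
  have h4 : A * Z ^ ((k : ℤ) * q - k) = (A * C) ^ q * A := by
    rw [← dt_hCA p q r k]; exact hsc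
  have h5 : Z ^ ((k : ℤ) * q - k) * A = (A * C) ^ q * A :=
    (((dt_central p q r k A).zpow_left _).eq).trans h4
  exact (mul_right_cancel h5).symm

end DeltaFacts

section CentralHelpers
variable {G : Type*} [Group G] {z : G}

lemma cmulP (hz : ∀ x, Commute z x) (i j : ℤ) (x y : G) :
    (z ^ i * x) * (z ^ j * y) = z ^ (i + j) * (x * y) := by
  calc (z ^ i * x) * (z ^ j * y) = z ^ i * ((x * z ^ j) * y) := by group
    _ = z ^ i * ((z ^ j * x) * y) := by rw [← ((hz x).zpow_left j).eq]
    _ = z ^ (i + j) * (x * y) := by rw [zpow_add]; group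

lemma cpow (hz : ∀ x, Commute z x) (i : ℤ) (x : G) (n : ℕ) :
    (z ^ i * x) ^ n = z ^ (i * n) * x ^ n := by
  rw [((hz x).zpow_left i).mul_pow, ← zpow_natCast (z ^ i) n, ← zpow_mul]

lemma ccomm (hz : ∀ x, Commute z x) (x : G) : x * z * x⁻¹ * z⁻¹ = 1 := by
  rw [← (hz x).eq]; group

end CentralHelpers

lemma fwd_rels (p q r k : ℕ) (m : ℤ)
    (hap : ((k / p : ℕ) : ℤ) * p = k) (hbq : ((k / q : ℕ) : ℤ) * q = k)
    (hcr : ((k / r : ℕ) : ℤ) * r = k)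
    (hm : m = ((k / p : ℕ) : ℤ) + ((k / q : ℕ) : ℤ) + ((k / r : ℕ) : ℤ) - k) :
    ∀ w ∈ deltaTildeRels p q r k, FreeGroup.lift (fwdGen p q r k m) w = 1 := by
  have hPc := ce_central p q r m
  have hS := ce_hS p q r m
  have hT := ce_hT p q r m
  have hTS' : (((PresentedGroup.of 1 : CentExtGroup p q r m) * PresentedGroup.of 0) ^ q)⁻¹ =
      (PresentedGroup.of 2 : CentExtGroup p q r m) ^ ((q : ℤ) * m) := by
    rw [eq_inv_of_mul_eq_one_left (ce_hTS p q r m), inv_inv]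
  have hX : (PresentedGroup.of 2 : CentExtGroup p q r m) ^ (((k / q : ℕ) : ℤ)) *
        ((PresentedGroup.of 2 : CentExtGroup p q r m) ^ m * PresentedGroup.of 1 *
          PresentedGroup.of 0)⁻¹ =
      (PresentedGroup.of 2 : CentExtGroup p q r m) ^ (((k / q : ℕ) : ℤ) + -m) *
        ((PresentedGroup.of 1 : CentExtGroup p q r m) * PresentedGroup.of 0)⁻¹ := by
    rw [mul_assoc (PresentedGroup.of 2 ^ m), mul_inv_rev, ← zpow_neg,
      ← ((hPc ((PresentedGroup.of 1 : CentExtGroup p q r m) * PresentedGroup.of 0)⁻¹).zpow_left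
        (-m)).eq, zpow_add]
    group
  intro w hw
  simp only [deltaTildeRels, Set.mem_insert_iff, Set.mem_singleton_iff] at hw
  rcases hw with rfl | rfl | rfl | rfl | rfl | rfl | rfl
  · simp only [map_mul, map_pow, map_inv, FreeGroup.lift_apply_of, fwdGen_zero, fwdGen_three]
    simp only [← zpow_natCast (PresentedGroup.of 2 : CentExtGroup p q r m)]
    rw [cpow hPc, hS, mul_one, ← zpow_neg, ← zpow_add,
      show ((k / p : ℕ) : ℤ) * p + -(k : ℤ) = 0 by linear_combination hap, zpow_zero]
  · simp only [map_mul, map_pow, map_inv, map_zpow, FreeGroup.lift_apply_of, fwdGen_one, fwdGen_three]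
    simp only [← zpow_natCast (PresentedGroup.of 2 : CentExtGroup p q r m)]
    rw [hX, cpow hPc, inv_pow, hTS', ← zpow_neg, mul_assoc, ← zpow_add, ← zpow_add,
      show (((k / q : ℕ) : ℤ) + -m) * q + ((q : ℤ) * m + -(k : ℤ)) = 0 by linear_combination hbq,
      zpow_zero]
  · simp only [map_mul, map_pow, map_inv, FreeGroup.lift_apply_of, fwdGen_two, fwdGen_three]
    simp only [← zpow_natCast (PresentedGroup.of 2 : CentExtGroup p q r m)]
    rw [cpow hPc, hT, mul_one, ← zpow_neg, ← zpow_add,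
      show ((k / r : ℕ) : ℤ) * r + -(k : ℤ) = 0 by linear_combination hcr, zpow_zero]
  · simp only [map_mul, map_pow, map_inv, map_zpow, FreeGroup.lift_apply_of, fwdGen_zero, fwdGen_one,
      fwdGen_two, fwdGen_three]
    simp only [← zpow_natCast (PresentedGroup.of 2 : CentExtGroup p q r m)]
    rw [hX, cmulP hPc, cmulP hPc, ← zpow_neg, mul_assoc,
      ← ((hPc ((PresentedGroup.of 0 : CentExtGroup p q r m) *
          (PresentedGroup.of 1 * PresentedGroup.of 0)⁻¹ * PresentedGroup.of 1)).zpow_left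
        (-(k : ℤ))).eq,
      ← mul_assoc, ← zpow_add,
      show ((k / p : ℕ) : ℤ) + (((k / q : ℕ) : ℤ) + -m) + ((k / r : ℕ) : ℤ) + -(k : ℤ) = 0 by
        linear_combination -hm,
      zpow_zero, one_mul,
      show (PresentedGroup.of 0 : CentExtGroup p q r m) *
          (PresentedGroup.of 1 * PresentedGroup.of 0)⁻¹ * PresentedGroup.of 1 = 1 by group]
  · simp only [map_mul, map_inv, FreeGroup.lift_apply_of, fwdGen_zero, fwdGen_three]
    exact ccomm hPc _
  · simp only [map_mul, map_inv, FreeGroup.lift_apply_of, fwdGen_one, fwdGen_three]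
    exact ccomm hPc _
  · simp only [map_mul, map_inv, FreeGroup.lift_apply_of, fwdGen_two, fwdGen_three]
    exact ccomm hPc _

lemma bwd_rels (p q r k : ℕ) (m : ℤ)
    (hap : ((k / p : ℕ) : ℤ) * p = k) (hbq : ((k / q : ℕ) : ℤ) * q = k)
    (hcr : ((k / r : ℕ) : ℤ) * r = k)
    (hm : m = ((k / p : ℕ) : ℤ) + ((k / q : ℕ) : ℤ) + ((k / r : ℕ) : ℤ) - k) :
    ∀ w ∈ centExtRels p q r m, FreeGroup.lift (bwdGen p q r k) w = 1 := by
  have hZc := dt_central p q r k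
  intro w hw
  simp only [centExtRels, Set.mem_insert_iff, Set.mem_singleton_iff] at hw
  rcases hw with rfl | rfl | rfl | rfl | rfl | rfl
  · simp only [map_pow, FreeGroup.lift_apply_of, bwdGen_zero]
    rw [cpow hZc, dt_hA, ← zpow_add,
      show -((k / p : ℕ) : ℤ) * p + (k : ℤ) = 0 by linear_combination -hap, zpow_zero]
  · simp only [map_pow, FreeGroup.lift_apply_of, bwdGen_one]
    rw [cpow hZc, dt_hC, ← zpow_add,
      show -((k / r : ℕ) : ℤ) * r + (k : ℤ) = 0 by linear_combination -hcr, zpow_zero]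
  · simp only [map_mul, map_pow, map_zpow, FreeGroup.lift_apply_of, bwdGen_zero, bwdGen_one,
      bwdGen_two]
    rw [cmulP hZc, cpow hZc, dt_hAC, ← zpow_add, ← zpow_add,
      show (-((k / p : ℕ) : ℤ) + -((k / r : ℕ) : ℤ)) * q + ((k : ℤ) * q - k) + (q : ℤ) * m = 0 by
        linear_combination (q : ℤ) * hm + hbq,
      zpow_zero]
  · simp only [map_mul, map_pow, map_zpow, FreeGroup.lift_apply_of, bwdGen_zero, bwdGen_one,
      bwdGen_two]
    rw [cmulP hZc, cpow hZc, dt_hCA, ← zpow_add, ← zpow_add,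
      show (-((k / r : ℕ) : ℤ) + -((k / p : ℕ) : ℤ)) * q + ((k : ℤ) * q - k) + (q : ℤ) * m = 0 by
        linear_combination (q : ℤ) * hm + hbq,
      zpow_zero]
  · simp only [map_mul, map_inv, FreeGroup.lift_apply_of, bwdGen_zero, bwdGen_two]
    exact ccomm hZc _
  · simp only [map_mul, map_inv, FreeGroup.lift_apply_of, bwdGen_one, bwdGen_two]
    exact ccomm hZc _

section Comp
variable (p q r k : ℕ) (m : ℤ)

local notation "A" => (PresentedGroup.of 0 : DeltaTilde p q r k)
local notation "C" => (PresentedGroup.of 2 : DeltaTilde p q r k)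
local notation "Z" => (PresentedGroup.of 3 : DeltaTilde p q r k)
local notation "S" => (PresentedGroup.of 0 : CentExtGroup p q r m)
local notation "T" => (PresentedGroup.of 1 : CentExtGroup p q r m)
local notation "P" => (PresentedGroup.of 2 : CentExtGroup p q r m)

lemma comp_bf
    (hF : ∀ w ∈ deltaTildeRels p q r k, FreeGroup.lift (fwdGen p q r k m) w = 1)
    (hB : ∀ w ∈ centExtRels p q r m, FreeGroup.lift (bwdGen p q r k) w = 1)
    (hm : m = ((k / p : ℕ) : ℤ) + ((k / q : ℕ) : ℤ) + ((k / r : ℕ) : ℤ) - k) :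
    (PresentedGroup.toGroup hB).comp (PresentedGroup.toGroup hF) = MonoidHom.id _ := by
  have hZc := dt_central p q r k
  ext i
  fin_cases i
  · show (PresentedGroup.toGroup hB) ((PresentedGroup.toGroup hF) (PresentedGroup.of 0)) =
      PresentedGroup.of 0
    simp only [PresentedGroup.toGroup.of, fwdGen_zero,
      map_mul, map_pow, PresentedGroup.toGroup.of, bwdGen_zero, bwdGen_two]
    rw [← mul_assoc, ← zpow_natCast Z (k / p), ← zpow_add, add_neg_cancel, zpow_zero, one_mul]
  · show (PresentedGroup.toGroup hB) ((PresentedGroup.toGroup hF) (PresentedGroup.of 1)) =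
      PresentedGroup.of 1
    simp only [PresentedGroup.toGroup.of, fwdGen_one,
      map_mul, map_pow, map_inv, map_zpow, bwdGen_zero, bwdGen_one, bwdGen_two]
    calc Z ^ (k / q) * (Z ^ m * (Z ^ (-((k / r : ℕ) : ℤ)) * C) *
            (Z ^ (-((k / p : ℕ) : ℤ)) * A))⁻¹
        = Z ^ ((k / q : ℕ) : ℤ) * ((Z ^ m * 1) * (Z ^ (-((k / r : ℕ) : ℤ)) * C) *
            (Z ^ (-((k / p : ℕ) : ℤ)) * A))⁻¹ := by
          rw [← zpow_natCast Z (k / q), mul_one]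
      _ = Z ^ ((k / q : ℕ) : ℤ) * (Z ^ (m + -((k / r : ℕ) : ℤ) + -((k / p : ℕ) : ℤ)) *
            (1 * C * A))⁻¹ := by rw [cmulP hZc, cmulP hZc]
      _ = Z ^ ((k / q : ℕ) : ℤ) * ((C * A)⁻¹ *
            Z ^ (-(m + -((k / r : ℕ) : ℤ) + -((k / p : ℕ) : ℤ)))) := by
          rw [one_mul, mul_inv_rev, zpow_neg]
      _ = Z ^ ((k / q : ℕ) : ℤ) *
            (Z ^ (-(m + -((k / r : ℕ) : ℤ) + -((k / p : ℕ) : ℤ))) * (C * A)⁻¹) := by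
          rw [← ((hZc (C * A)⁻¹).zpow_left _).eq]
      _ = Z ^ (((k / q : ℕ) : ℤ) + -(m + -((k / r : ℕ) : ℤ) + -((k / p : ℕ) : ℤ))) *
            (A⁻¹ * C⁻¹) := by rw [← mul_assoc, ← zpow_add, mul_inv_rev]
      _ = Z ^ ((k : ℕ) : ℤ) * (A⁻¹ * C⁻¹) := by
          rw [show ((k / q : ℕ) : ℤ) + -(m + -((k / r : ℕ) : ℤ) + -((k / p : ℕ) : ℤ)) =
            ((k : ℕ) : ℤ) by linear_combination -hm]
      _ = PresentedGroup.of 1 := (dt_hBe p q r k).symm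
  · show (PresentedGroup.toGroup hB) ((PresentedGroup.toGroup hF) (PresentedGroup.of 2)) =
      PresentedGroup.of 2
    simp only [PresentedGroup.toGroup.of, fwdGen_two,
      map_mul, map_pow, bwdGen_one, bwdGen_two]
    rw [← mul_assoc, ← zpow_natCast Z (k / r), ← zpow_add, add_neg_cancel, zpow_zero, one_mul]
  · show (PresentedGroup.toGroup hB) ((PresentedGroup.toGroup hF) (PresentedGroup.of 3)) =
      PresentedGroup.of 3
    simp only [PresentedGroup.toGroup.of, fwdGen_three, bwdGen_two]

lemma comp_fb
    (hF : ∀ w ∈ deltaTildeRels p q r k, FreeGroup.lift (fwdGen p q r k m) w = 1)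
    (hB : ∀ w ∈ centExtRels p q r m, FreeGroup.lift (bwdGen p q r k) w = 1) :
    (PresentedGroup.toGroup hF).comp (PresentedGroup.toGroup hB) = MonoidHom.id _ := by
  ext i
  fin_cases i
  · show (PresentedGroup.toGroup hF) ((PresentedGroup.toGroup hB) (PresentedGroup.of 0)) =
      PresentedGroup.of 0
    simp only [PresentedGroup.toGroup.of, bwdGen_zero,
      map_mul, map_zpow, fwdGen_zero, fwdGen_three]
    rw [← mul_assoc, ← zpow_natCast P (k / p), ← zpow_add, neg_add_cancel, zpow_zero, one_mul]
  · show (PresentedGroup.toGroup hF) ((PresentedGroup.toGroup hB) (PresentedGroup.of 1)) =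
      PresentedGroup.of 1
    simp only [PresentedGroup.toGroup.of, bwdGen_one,
      map_mul, map_zpow, fwdGen_two, fwdGen_three]
    rw [← mul_assoc, ← zpow_natCast P (k / r), ← zpow_add, neg_add_cancel, zpow_zero, one_mul]
  · show (PresentedGroup.toGroup hF) ((PresentedGroup.toGroup hB) (PresentedGroup.of 2)) =
      PresentedGroup.of 2
    simp only [PresentedGroup.toGroup.of, bwdGen_two, fwdGen_three]

end Comp

/-- Let `k = lcm(p,q,r)` and `m = k/p + k/q + k/r − k ≠ 0`.  Then
`G = ⟨s, t, φ ∣ s^p = t^r = 1, (st)^q = (ts)^q = φ^{-qm}, φ central⟩` is isomorphic to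
`Δ̃_k = ⟨ã, b̃, c̃, z ∣ ã^p = b̃^q = c̃^r = ã b̃ c̃ = z^k, z central⟩` via
`ã ↦ φ^{k/p} s`, `b̃ ↦ φ^{k/q} (φ^m t s)⁻¹`, `c̃ ↦ φ^{k/r} t`, `z ↦ φ`. -/
theorem deltaTilde_iso_centExt (p q r : ℕ) (hp : 2 ≤ p) (hq : 2 ≤ q) (hr : 2 ≤ r) :
    ∀ (k : ℕ) (m : ℤ), k = Nat.lcm p (Nat.lcm q r) →
      m = ((k / p : ℕ) : ℤ) + ((k / q : ℕ) : ℤ) + ((k / r : ℕ) : ℤ) - (k : ℤ) → m ≠ 0 →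
    ∃ e : DeltaTilde p q r k ≃* CentExtGroup p q r m,
      e (PresentedGroup.of 0)
          = (PresentedGroup.of 2 : CentExtGroup p q r m) ^ (k / p) * PresentedGroup.of 0 ∧
      e (PresentedGroup.of 1)
          = (PresentedGroup.of 2 : CentExtGroup p q r m) ^ (k / q) *
              ((PresentedGroup.of 2 : CentExtGroup p q r m) ^ m * PresentedGroup.of 1 *
                PresentedGroup.of 0)⁻¹ ∧
      e (PresentedGroup.of 2)
          = (PresentedGroup.of 2 : CentExtGroup p q r m) ^ (k / r) * PresentedGroup.of 1 ∧
      e (PresentedGroup.of 3) = (PresentedGroup.of 2 : CentExtGroup p q r m) := by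
  intro k m hk hm hm0
  have hpk : p ∣ k := hk ▸ Nat.dvd_lcm_left _ _
  have hqk : q ∣ k := hk ▸ Nat.dvd_trans (Nat.dvd_lcm_left q r) (Nat.dvd_lcm_right _ _)
  have hrk : r ∣ k := hk ▸ Nat.dvd_trans (Nat.dvd_lcm_right q r) (Nat.dvd_lcm_right _ _)
  have hap : ((k / p : ℕ) : ℤ) * p = k := by exact_mod_cast Nat.div_mul_cancel hpk
  have hbq : ((k / q : ℕ) : ℤ) * q = k := by exact_mod_cast Nat.div_mul_cancel hqk
  have hcr : ((k / r : ℕ) : ℤ) * r = k := by exact_mod_cast Nat.div_mul_cancel hrk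
  have hF := fwd_rels p q r k m hap hbq hcr hm
  have hB := bwd_rels p q r k m hap hbq hcr hm
  refine ⟨MonoidHom.toMulEquiv (PresentedGroup.toGroup hF) (PresentedGroup.toGroup hB)
      (comp_bf p q r k m hF hB hm) (comp_fb p q r k m hF hB), ?_, ?_, ?_, ?_⟩
  · show (PresentedGroup.toGroup hF) (PresentedGroup.of 0) = _
    rw [PresentedGroup.toGroup.of, fwdGen_zero]
  · show (PresentedGroup.toGroup hF) (PresentedGroup.of 1) = _
    rw [PresentedGroup.toGroup.of, fwdGen_one]
  · show (PresentedGroup.toGroup hF) (PresentedGroup.of 2) = _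
    rw [PresentedGroup.toGroup.of, fwdGen_two]
  · show (PresentedGroup.toGroup hF) (PresentedGroup.of 3) = _
    rw [PresentedGroup.toGroup.of, fwdGen_three]
end

section
/- Let G be a residually finite group generated by a finite set S, such that every finite-order element of G is conjugate to a power of an element of S. Then G is virtually torsion-free: there exists a finite-index normal subgroup N of G containing no nontrivial elements of finite order. -/
/-!
Only finitely many nontrivial torsion elements are powers of generators: a generator of infinite
order contributes none, and one of finite order only its finitely many powers. Residual finiteness
gives a finite-index normal subgroup avoiding all of them. A nontrivial torsion element of that
subgroup would be conjugate to one of them, and normality would put that power in the subgroup.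
-/

open Subgroup

section

variable {G : Type*} [Group G]

theorem IsOfFinOrder.of_zpow {x : G} {k : ℤ} (h : IsOfFinOrder (x ^ k)) (hk : k ≠ 0) :
    IsOfFinOrder x := by
  rcases Int.natAbs_eq k with e | e <;> rw [e] at h
  · rw [zpow_natCast] at h
    simpa [hk] using isOfFinOrder_pow.mp h
  · rw [zpow_neg, isOfFinOrder_inv_iff, zpow_natCast] at h
    simpa [hk] using isOfFinOrder_pow.mp h

theorem IsOfFinOrder.conj {x : G} (hx : IsOfFinOrder x) (h : G) :
    IsOfFinOrder (h * x * h⁻¹) := by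
  rw [← orderOf_pos_iff, ← MulAut.conj_apply, MulEquiv.orderOf_eq]
  exact hx.orderOf_pos

theorem Subgroup.finite_zpowers_inter_setOf_isOfFinOrder (x : G) :
    ((zpowers x : Set G) ∩ {y | IsOfFinOrder y}).Finite := by
  by_cases hx : IsOfFinOrder x
  · exact (finite_zpowers.mpr hx).inter_of_left _
  · refine (Set.finite_singleton 1).subset ?_
    rintro _ ⟨⟨k, rfl⟩, hk⟩
    have : k = 0 := by_contra fun hk0 => hx (hk.of_zpow hk0)
    simp [this]

theorem Group.exists_finiteIndex_normal_disjoint_of_finite [Group.ResiduallyFinite G] {F : Set G}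
    (hF : F.Finite) (h1 : 1 ∉ F) :
    ∃ N : Subgroup G, N.Normal ∧ N.FiniteIndex ∧ Disjoint (N : Set G) F := by
  have : ∀ g : F, ∃ H : Subgroup G, H.FiniteIndex ∧ (g : G) ∉ H := fun g =>
    residuallyFinite_iff_exists_finiteIndex.mp ‹ResiduallyFinite G› g
      (ne_of_mem_of_not_mem g.2 h1)
  choose H hHfin hgH using this
  have := hF.to_subtype
  have : (⨅ g : F, H g).FiniteIndex := finiteIndex_iInf hHfin
  refine ⟨(⨅ g : F, H g).normalCore, normalCore_normal _, inferInstance, ?_⟩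
  refine Set.disjoint_right.mpr fun g hg hgN => hgH ⟨g, hg⟩ ?_
  exact iInf_le H ⟨g, hg⟩ (normalCore_le _ hgN)

end

theorem virtually_torsion_free_of_residually_finite_general {G : Type*} [Group G]
    (S : Set G) (hSfin : S.Finite)
    (hres : ∀ g : G, g ≠ 1 → ∃ H : Subgroup G, H.FiniteIndex ∧ g ∉ H)
    (htor : ∀ g : G, IsOfFinOrder g → ∃ s ∈ S, ∃ (k : ℤ) (h : G), g = h⁻¹ * s ^ k * h) :
    ∃ N : Subgroup G, N.Normal ∧ N.FiniteIndex ∧ ∀ g ∈ N, IsOfFinOrder g → g = 1 := by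
  have : Group.ResiduallyFinite G := Group.residuallyFinite_iff_exists_finiteIndex.mpr hres
  have hT : ((⋃ s ∈ S, (zpowers s : Set G) ∩ {y | IsOfFinOrder y}) \ {1}).Finite :=
    (hSfin.biUnion fun s _ => finite_zpowers_inter_setOf_isOfFinOrder s).sdiff
  obtain ⟨N, hN, hNfin, hNT⟩ := Group.exists_finiteIndex_normal_disjoint_of_finite hT (by simp)
  refine ⟨N, hN, hNfin, fun g hgN hg => ?_⟩
  obtain ⟨s, hs, k, h, rfl⟩ := htor g hg
  by_contra hne
  have hskN : s ^ k ∈ N := by simpa [mul_assoc] using hN.conj_mem _ hgN h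
  have hsk : IsOfFinOrder (s ^ k) := by simpa [mul_assoc] using hg.conj h
  have hsk1 : s ^ k ≠ 1 := fun h1 => hne (by simp [h1])
  exact Set.disjoint_left.mp hNT hskN ⟨Set.mem_biUnion hs ⟨⟨k, rfl⟩, hsk⟩, hsk1⟩

/-- A finitely generated residually finite group in which every finite-order element is
conjugate to a power of a generator is virtually torsion-free: it has a finite-index
normal subgroup with no nontrivial torsion. -/
theorem virtually_torsion_free_of_residually_finite {G : Type*} [Group G]
    (S : Set G) (hSfin : S.Finite) (hgen : Subgroup.closure S = ⊤)
    (hres : ∀ g : G, g ≠ 1 → ∃ H : Subgroup G, H.FiniteIndex ∧ g ∉ H)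
    (htor : ∀ g : G, IsOfFinOrder g → ∃ s ∈ S, ∃ (k : ℤ) (h : G), g = h⁻¹ * s ^ k * h) :
    ∃ N : Subgroup G, N.Normal ∧ N.FiniteIndex ∧ ∀ g ∈ N, IsOfFinOrder g → g = 1 :=
  virtually_torsion_free_of_residually_finite_general S hSfin hres htor
end
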